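/- arXiv:2211.08944 — 3 statements merged into one kernel-verified Lean document; each statement's English description precedes it below -/
import Mathlib

section
/- Let X and Y be random variables where Y = D(X) for a measurable function D. Let X̂ be an estimator such that X̂ is conditionally independent of X given Y. If X̂ is perfectly consistent (the conditional distribution of Y given X̂ equals the conditional distribution of Y given X, i.e., D(X̂) = Y almost surely) and achieves perfect perceptual quality (the law of X̂ equals the law of X), then the conditional distribution of X̂ given Y equals the conditional distribution of X given Y (the posterior). -/
open MeasureTheory ProbabilityTheory

/-! A conditional distribution given `Y` is determined, up to a `μ.map Y`-null set, by the joint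
law of the pair with `Y`. Consistency `D ∘ Xhat = Y` a.s. makes the law of `(Y, Xhat)` the
push-forward of the law of `Xhat` along `x ↦ (D x, x)`, which by perceptual quality is the
push-forward of the law of `X`, i.e. the law of `(Y, X)`. -/

lemma condDistrib_ae_eq_of_map_prodMk_eq {α β Ω : Type*} {mα : MeasurableSpace α}
    [MeasurableSpace β] [MeasurableSpace Ω] [StandardBorelSpace Ω] [Nonempty Ω]
    {μ : Measure α} [IsFiniteMeasure μ] {Y : α → β} {X Z : α → Ω}
    (hX : AEMeasurable X μ) (hZ : AEMeasurable Z μ)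
    (h : μ.map (fun ω => (Y ω, Z ω)) = μ.map (fun ω => (Y ω, X ω))) :
    condDistrib Z Y μ =ᵐ[μ.map Y] condDistrib X Y μ :=
  condDistrib_ae_eq_of_measure_eq_compProd Y hZ (by rw [h, compProd_map_condDistrib hX])

theorem posterior_uniqueness_forward_general
    {n m : ℕ} {Ω : Type*} [MeasurableSpace Ω]
    (μ : Measure Ω) [IsProbabilityMeasure μ]
    (X Xhat : Ω → EuclideanSpace ℝ (Fin n))
    (D : EuclideanSpace ℝ (Fin n) → EuclideanSpace ℝ (Fin m))
    (hX : Measurable X) (hXhat : Measurable Xhat) (hD : Measurable D)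
    (Y : Ω → EuclideanSpace ℝ (Fin m)) (hY : Y = D ∘ X)
    -- perfect consistency: D(Xhat) = Y almost surely
    (hconsistent : (fun ω => D (Xhat ω)) =ᵐ[μ] Y)
    -- perfect perceptual quality: Law(Xhat) = Law(X)
    (hperc : μ.map Xhat = μ.map X) :
    -- conclusion: Xhat is a posterior sampler
    ∀ᵐ y ∂(μ.map Y), condDistrib Xhat Y μ y = condDistrib X Y μ y := by
  have hgraph : IdentDistrib ((fun x => (D x, x)) ∘ Xhat) ((fun x => (D x, x)) ∘ X) μ μ :=
    IdentDistrib.comp ⟨hXhat.aemeasurable, hX.aemeasurable, hperc⟩ (hD.prodMk measurable_id)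
  have hjoint : μ.map (fun ω => (Y ω, Xhat ω)) = μ.map (fun ω => (Y ω, X ω)) := by
    calc μ.map (fun ω => (Y ω, Xhat ω))
        = μ.map ((fun x => (D x, x)) ∘ Xhat) :=
          Measure.map_congr (hconsistent.mono fun ω h => by simp [h])
      _ = μ.map ((fun x => (D x, x)) ∘ X) := hgraph.map_eq
      _ = μ.map (fun ω => (Y ω, X ω)) := by rw [hY]; rfl
  exact condDistrib_ae_eq_of_map_prodMk_eq hX.aemeasurable hXhat.aemeasurable hjoint

/-- **Posterior uniqueness (forward direction).** If an estimator `Xhat`, conditionally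
independent of `X` given `Y = D ∘ X`, is perfectly consistent (`D ∘ Xhat = Y` a.s.) and
achieves perfect perceptual quality (`Law(Xhat) = Law(X)`), then its conditional
distribution given `Y` agrees with the posterior `p_{X|Y}` almost everywhere. -/
theorem posterior_uniqueness_forward
    {n m : ℕ} {Ω : Type*} [MeasurableSpace Ω] [StandardBorelSpace Ω]
    (μ : Measure Ω) [IsProbabilityMeasure μ]
    (X Xhat : Ω → EuclideanSpace ℝ (Fin n))
    (D : EuclideanSpace ℝ (Fin n) → EuclideanSpace ℝ (Fin m))
    (hX : Measurable X) (hXhat : Measurable Xhat) (hD : Measurable D)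
    (Y : Ω → EuclideanSpace ℝ (Fin m)) (hY : Y = D ∘ X) (hYm : Measurable Y)
    -- Markov chain X → Y → Xhat : X and Xhat are conditionally independent given Y
    (hindep : CondIndepFun (MeasurableSpace.comap Y inferInstance) hYm.comap_le X Xhat μ)
    -- perfect consistency: D(Xhat) = Y almost surely
    (hconsistent : (fun ω => D (Xhat ω)) =ᵐ[μ] Y)
    -- perfect perceptual quality: Law(Xhat) = Law(X)
    (hperc : μ.map Xhat = μ.map X) :
    -- conclusion: Xhat is a posterior sampler
    ∀ᵐ y ∂(μ.map Y), condDistrib Xhat Y μ y = condDistrib X Y μ y :=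
  posterior_uniqueness_forward_general μ X Xhat D hX hXhat hD Y hY hconsistent hperc
end

section
/- If D is non-invertible in the sense that the posterior p_{X|Y}(·|y) is not a Dirac measure for a set of y's of positive probability, then no deterministic estimator X̂ = G(Y) that is perfectly consistent can achieve perfect perceptual quality Law(X̂) = Law(X). -/
/-!
If `Y = D(X)` and the estimator `X̂` is consistent (`D(X̂) = Y` a.s.), then the pairs `(Y, X)` and
`(Y, X̂)` are both images of `(D x, x)` under `Law(X)` and `Law(X̂)` respectively. Perfect perceptual
quality `Law(X̂) = Law(X)` therefore makes the two joint laws equal, hence the two posteriors agree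
a.e. For a deterministic estimator `X̂ = G(Y)` the posterior of `X̂` is the Dirac kernel at `G(y)`,
so the posterior of `X` would be Dirac for a.e. `y`.
-/

open MeasureTheory ProbabilityTheory

section Posterior

variable {Ω α β : Type*} [MeasurableSpace Ω] [MeasurableSpace α] [MeasurableSpace β]
  {μ : Measure Ω}

lemma map_prod_eq_map_map_of_ae_eq_comp {X : Ω → α} {Y : Ω → β} {D : α → β}
    (hX : AEMeasurable X μ) (hD : Measurable D) (hY : Y =ᵐ[μ] D ∘ X) :
    μ.map (fun ω => (Y ω, X ω)) = (μ.map X).map (fun x => (D x, x)) := by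
  rw [AEMeasurable.map_map_of_aemeasurable (by fun_prop) hX]
  refine Measure.map_congr ?_
  filter_upwards [hY] with ω hω
  simp [hω]

variable [StandardBorelSpace α] [Nonempty α] [IsFiniteMeasure μ]

lemma condDistrib_ae_eq_of_map_prod_eq {X X' : Ω → α} {Y : Ω → β}
    (hX : AEMeasurable X μ) (hX' : AEMeasurable X' μ)
    (h : μ.map (fun ω => (Y ω, X ω)) = μ.map (fun ω => (Y ω, X' ω))) :
    condDistrib X Y μ =ᵐ[μ.map Y] condDistrib X' Y μ :=
  condDistrib_ae_eq_of_measure_eq_compProd Y hX (h.trans (compProd_map_condDistrib hX').symm)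

/-- The posterior uniqueness theorem, with `X'` in the role of a consistent estimator. -/
theorem condDistrib_ae_eq_of_consistent_of_map_eq {X X' : Ω → α} {Y : Ω → β} {D : α → β}
    (hX : AEMeasurable X μ) (hX' : AEMeasurable X' μ) (hD : Measurable D)
    (hY : Y =ᵐ[μ] D ∘ X) (hY' : Y =ᵐ[μ] D ∘ X') (hlaw : μ.map X' = μ.map X) :
    condDistrib X Y μ =ᵐ[μ.map Y] condDistrib X' Y μ := by
  refine condDistrib_ae_eq_of_map_prod_eq hX hX' ?_
  rw [map_prod_eq_map_map_of_ae_eq_comp hX hD hY, map_prod_eq_map_map_of_ae_eq_comp hX' hD hY',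
    hlaw]

end Posterior

theorem deterministic_consistent_imperfect_perceptual_general
    {n m : ℕ} {Ω : Type*} [MeasurableSpace Ω]
    (μ : Measure Ω) [IsProbabilityMeasure μ]
    (X : Ω → EuclideanSpace ℝ (Fin n))
    (D : EuclideanSpace ℝ (Fin n) → EuclideanSpace ℝ (Fin m))
    (hX : Measurable X) (hD : Measurable D)
    (Y : Ω → EuclideanSpace ℝ (Fin m)) (hY : Y = D ∘ X)
    -- non-invertibility: on a set of y's of positive probability the posterior is non-Dirac
    (hillposed : 0 < μ.map Y {y | ∀ x, condDistrib X Y μ y ≠ Measure.dirac x})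
    -- deterministic estimator
    (G : EuclideanSpace ℝ (Fin m) → EuclideanSpace ℝ (Fin n)) (hG : Measurable G)
    (Xhat : Ω → EuclideanSpace ℝ (Fin n)) (hXhat : Xhat = G ∘ Y)
    -- perfect consistency
    (hconsistent : (fun ω => D (Xhat ω)) =ᵐ[μ] Y) :
    -- conclusion: perfect perceptual quality is impossible
    μ.map Xhat ≠ μ.map X := by
  intro hlaw
  subst hXhat
  have hYm : Measurable Y := hY ▸ hD.comp hX
  have hposterior : condDistrib X Y μ =ᵐ[μ.map Y] Kernel.deterministic G hG :=
    (condDistrib_ae_eq_of_consistent_of_map_eq hX.aemeasurable (hG.comp hYm).aemeasurable hD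
      (.of_eq hY) hconsistent.symm hlaw).trans (condDistrib_comp_self Y hG)
  refine hillposed.ne' (measure_eq_zero_iff_ae_notMem.mpr ?_)
  filter_upwards [hposterior] with y hy
  simp only [not_forall, not_not]
  exact ⟨G y, by rw [hy, Kernel.deterministic_apply]⟩

/-- **No consistent deterministic estimator attains perfect perceptual quality** when the
degradation is non-invertible, in the sense that the posterior `p_{X|Y}(·|y)` is not a
Dirac measure for a set of `y`'s of positive probability. -/
theorem deterministic_consistent_imperfect_perceptual
    {n m : ℕ} {Ω : Type*} [MeasurableSpace Ω] [StandardBorelSpace Ω]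
    (μ : Measure Ω) [IsProbabilityMeasure μ]
    (X : Ω → EuclideanSpace ℝ (Fin n))
    (D : EuclideanSpace ℝ (Fin n) → EuclideanSpace ℝ (Fin m))
    (hX : Measurable X) (hD : Measurable D)
    (Y : Ω → EuclideanSpace ℝ (Fin m)) (hY : Y = D ∘ X)
    -- non-invertibility: on a set of y's of positive probability the posterior is non-Dirac
    (hillposed : 0 < μ.map Y {y | ∀ x, condDistrib X Y μ y ≠ Measure.dirac x})
    -- deterministic estimator
    (G : EuclideanSpace ℝ (Fin m) → EuclideanSpace ℝ (Fin n)) (hG : Measurable G)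
    (Xhat : Ω → EuclideanSpace ℝ (Fin n)) (hXhat : Xhat = G ∘ Y)
    -- perfect consistency
    (hconsistent : (fun ω => D (Xhat ω)) =ᵐ[μ] Y) :
    -- conclusion: perfect perceptual quality is impossible
    μ.map Xhat ≠ μ.map X :=
  deterministic_consistent_imperfect_perceptual_general μ X D hX hD Y hY hillposed G hG Xhat hXhat
    hconsistent
end

section
/- For the sawtooth estimators f_n(y) = ny mod 1 with Y ~ U[0,1], the deterministic sensitivity satisfies: for any ε ∈ (0, 1/(2n)), and any y at distance more than ε from the discontinuity points {k/n}, max_{|δ|≤ε} |f_n(y) − f_n(y+δ)| = nε. Hence the robustness measure R_{f_n,ε} ≥ (1 − 2nε)·n²ε², which grows quadratically in n for fixed small ε — erratic estimators with better perceptual quality are necessarily less robust. -/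
/-!
Write `x = n y`. If `y` stays more than `ε` away from the grid `ℤ / n`, then `x` stays more
than `n ε` away from `ℤ`, so a shift `|δ| ≤ ε` does not change `⌊n y⌋`; on this stretch the
sawtooth is the line of slope `n` and moves by exactly `n |δ|`, with maximum `n ε` at `δ = ε`.
Such points fill the `n` open intervals `(j/n + ε, (j+1)/n - ε)` of `[0, 1]`, of total length
`1 - 2 n ε`, and integrating the squared sensitivity `n² ε²` over them bounds `R_{f_n,ε}`.
-/

open MeasureTheory Set
open scoped ENNReal

section

variable {α : Type*} [Field α] [LinearOrder α] [IsStrictOrderedRing α]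

theorem Int.floor_add_eq_of_lt_abs_sub [FloorRing α] {x r t : α} (hx : ∀ k : ℤ, r < |x - k|)
    (ht : |t| ≤ r) : ⌊x + t⌋ = ⌊x⌋ := by
  have hlow : (⌊x⌋ : α) + r < x := by
    have h := hx ⌊x⌋
    rw [abs_of_nonneg (sub_nonneg.2 (Int.floor_le x))] at h
    linarith
  have hup : x + r < ⌊x⌋ + 1 := by
    have h := hx (⌊x⌋ + 1)
    push_cast at h
    rw [abs_of_neg (by linarith [Int.lt_floor_add_one x])] at h
    linarith
  rw [Int.floor_eq_iff]
  constructor <;> linarith [abs_le.1 ht]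

theorem Int.fract_add_eq_of_lt_abs_sub [FloorRing α] {x r t : α} (hx : ∀ k : ℤ, r < |x - k|)
    (ht : |t| ≤ r) : Int.fract (x + t) = Int.fract x + t := by
  rw [Int.fract, Int.fract, Int.floor_add_eq_of_lt_abs_sub hx ht]
  ring

theorem mul_lt_abs_mul_sub_of_lt_abs_sub_div {c ε y : α} (hc : 0 < c)
    (hy : ∀ k : ℤ, ε < |y - k / c|) (k : ℤ) : c * ε < |c * y - k| := by
  have hscale : c * y - k = c * (y - k / c) := by field_simp
  rw [hscale, abs_mul, abs_of_pos hc]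
  exact mul_lt_mul_of_pos_left (hy k) hc

theorem lt_abs_sub_of_mem_Ioo {a b ε y z : α} (hy : y ∈ Ioo (a + ε) (b - ε))
    (hz : z ≤ a ∨ b ≤ z) : ε < |y - z| := by
  rcases hz with hz | hz
  · exact lt_abs.2 (Or.inl (by linarith [hy.1]))
  · exact lt_abs.2 (Or.inr (by linarith [hy.2]))

end

section

variable {c ε y : ℝ}

theorem abs_fract_mul_sub_fract_mul_add (hc : 0 < c) (hy : ∀ k : ℤ, ε < |y - k / c|)
    {δ : ℝ} (hδ : |δ| ≤ ε) :
    |Int.fract (c * y) - Int.fract (c * (y + δ))| = c * |δ| := by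
  have hcδ : |c * δ| ≤ c * ε := by
    rw [abs_mul, abs_of_pos hc]
    exact mul_le_mul_of_nonneg_left hδ hc.le
  rw [mul_add, Int.fract_add_eq_of_lt_abs_sub (mul_lt_abs_mul_sub_of_lt_abs_sub_div hc hy) hcδ,
    sub_add_cancel_left, abs_neg, abs_mul, abs_of_pos hc]

theorem iSup_abs_fract_mul_sub_fract_mul_add (hc : 0 < c) (hε : 0 ≤ ε)
    (hy : ∀ k : ℤ, ε < |y - k / c|) :
    ⨆ δ : {δ : ℝ // |δ| ≤ ε}, |Int.fract (c * y) - Int.fract (c * (y + δ))| = c * ε := by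
  refine IsGreatest.csSup_eq ⟨⟨⟨ε, (abs_of_nonneg hε).le⟩, ?_⟩, ?_⟩
  · dsimp only
    rw [abs_fract_mul_sub_fract_mul_add hc hy (abs_of_nonneg hε).le, abs_of_nonneg hε]
  · rintro _ ⟨δ, rfl⟩
    dsimp only
    rw [abs_fract_mul_sub_fract_mul_add hc hy δ.2]
    exact mul_le_mul_of_nonneg_left δ.2 hc.le

theorem ofReal_sq_le_iSup_abs_fract_mul_sub_fract_mul_add (hc : 0 < c) (hε : 0 ≤ ε)
    (hy : ∀ k : ℤ, ε < |y - k / c|) :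
    ENNReal.ofReal ((c * ε) ^ 2) ≤ ⨆ δ : {δ : ℝ // |δ| ≤ ε},
      ENNReal.ofReal (|Int.fract (c * y) - Int.fract (c * (y + δ))| ^ 2) := by
  refine le_iSup_of_le ⟨ε, (abs_of_nonneg hε).le⟩ ?_
  rw [abs_fract_mul_sub_fract_mul_add hc hy (abs_of_nonneg hε).le, abs_of_nonneg hε]

end

def sawtoothCore (n : ℕ) (ε : ℝ) : Set ℝ :=
  ⋃ j ∈ Finset.range n, Ioo ((j : ℝ) / n + ε) ((j + 1) / n - ε)

namespace sawtoothCore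

variable {n : ℕ} {ε y : ℝ}

theorem measurableSet : MeasurableSet (sawtoothCore n ε) :=
  (Finset.range n).measurableSet_biUnion fun _ _ => measurableSet_Ioo

theorem pairwiseDisjoint (hε : 0 ≤ ε) : (Finset.range n : Set ℕ).PairwiseDisjoint
    fun j : ℕ => Ioo ((j : ℝ) / n + ε) ((j + 1) / n - ε) := by
  have hlt : ∀ {i j : ℕ}, i < j → Disjoint (Ioo ((i : ℝ) / n + ε) ((i + 1) / n - ε))
      (Ioo ((j : ℝ) / n + ε) ((j + 1) / n - ε)) := fun {i j} hij => by
    have hgap : ((i : ℝ) + 1) / n ≤ j / n :=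
      div_le_div_of_nonneg_right (by exact_mod_cast hij) n.cast_nonneg
    exact Set.disjoint_left.2 fun y hi hj => by linarith [hi.2, hj.1]
  intro i _ j _ hij
  exact (lt_or_gt_of_ne hij).elim hlt fun h => (hlt h).symm

theorem volume_eq (hn : n ≠ 0) (hε : 0 ≤ ε) :
    volume (sawtoothCore n ε) = ENNReal.ofReal (1 - 2 * n * ε) := by
  have hn' : (n : ℝ) ≠ 0 := by exact_mod_cast hn
  have hlen : ∀ j : ℕ, ((j : ℝ) + 1) / n - ε - (j / n + ε) = (1 - 2 * n * ε) / n := by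
    intro j
    field_simp
    ring
  rw [sawtoothCore, measure_biUnion_finset (pairwiseDisjoint hε) fun _ _ => measurableSet_Ioo]
  simp only [Real.volume_Ioo, hlen, Finset.sum_const, Finset.card_range]
  rw [← ENNReal.ofReal_nsmul, nsmul_eq_mul, mul_div_cancel₀ _ hn']

theorem lt_abs_sub_intCast_div (hy : y ∈ sawtoothCore n ε) (k : ℤ) : ε < |y - k / n| := by
  simp only [sawtoothCore, mem_iUnion, Finset.mem_range] at hy
  obtain ⟨j, -, hy⟩ := hy
  refine lt_abs_sub_of_mem_Ioo hy ?_
  rcases le_or_gt k j with hk | hk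
  · exact Or.inl (div_le_div_of_nonneg_right (by exact_mod_cast hk) n.cast_nonneg)
  · have hk' : (j : ℤ) + 1 ≤ k := hk
    exact Or.inr (div_le_div_of_nonneg_right (by exact_mod_cast hk') n.cast_nonneg)

theorem subset_Icc (hε : 0 ≤ ε) : sawtoothCore n ε ⊆ Icc 0 1 := by
  intro y hy
  simp only [sawtoothCore, mem_iUnion, Finset.mem_range] at hy
  obtain ⟨j, hj, hy⟩ := hy
  have hleft : (0 : ℝ) ≤ j / n := by positivity
  have hright : ((j : ℝ) + 1) / n ≤ 1 := div_le_one_of_le₀ (by exact_mod_cast hj) n.cast_nonneg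
  exact ⟨by linarith [hy.1], by linarith [hy.2]⟩

end sawtoothCore

theorem sawtooth_sensitivity_and_robustness_general (n : ℕ) (hn : 1 ≤ n) (ε : ℝ)
    (hε : 0 < ε) :
    (∀ y : ℝ, (∀ k : ℤ, ε < |y - k / n|) →
      (⨆ δ : {δ : ℝ // |δ| ≤ ε},
          |Int.fract (n * y) - Int.fract (n * (y + δ))|) = n * ε) ∧
    ENNReal.ofReal ((1 - 2 * n * ε) * (n ^ 2 * ε ^ 2)) ≤
      ∫⁻ y in Icc (0 : ℝ) 1, ⨆ δ : {δ : ℝ // |δ| ≤ ε},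
        ENNReal.ofReal (|Int.fract (n * y) - Int.fract (n * (y + δ))| ^ 2) := by
  have hn₀ : (0 : ℝ) < n := by exact_mod_cast hn
  refine ⟨fun y hy => iSup_abs_fract_mul_sub_fract_mul_add hn₀ hε.le hy, ?_⟩
  calc ENNReal.ofReal ((1 - 2 * n * ε) * (n ^ 2 * ε ^ 2))
      = ENNReal.ofReal ((n * ε) ^ 2) * volume (sawtoothCore n ε) := by
        rw [sawtoothCore.volume_eq (by omega) hε.le, ← ENNReal.ofReal_mul (by positivity),
          mul_pow, mul_comm]
    _ = ∫⁻ _ in sawtoothCore n ε, ENNReal.ofReal ((n * ε) ^ 2) :=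
        (setLIntegral_const _ _).symm
    _ ≤ ∫⁻ y in sawtoothCore n ε, ⨆ δ : {δ : ℝ // |δ| ≤ ε},
          ENNReal.ofReal (|Int.fract (n * y) - Int.fract (n * (y + δ))| ^ 2) :=
        setLIntegral_mono' sawtoothCore.measurableSet fun y hy =>
          ofReal_sq_le_iSup_abs_fract_mul_sub_fract_mul_add hn₀ hε.le
            (sawtoothCore.lt_abs_sub_intCast_div hy)
    _ ≤ _ := lintegral_mono_set (sawtoothCore.subset_Icc hε.le)

/-- **Erratic estimators are less robust.** For the sawtooth estimators
`f_n(y) = ny mod 1` with `Y ~ U[0,1]`: for `ε ∈ (0, 1/(2n))` and any `y` at distance more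
than `ε` from every discontinuity point `k/n`, the sensitivity
`max_{|δ|≤ε} |f_n(y) − f_n(y+δ)|` equals `nε`; hence the robustness measure satisfies
`R_{f_n,ε} ≥ (1 − 2nε)·n²ε²`, growing quadratically in `n`. -/
theorem sawtooth_sensitivity_and_robustness (n : ℕ) (hn : 1 ≤ n) (ε : ℝ)
    (hε : 0 < ε) (hε' : ε < 1 / (2 * n)) :
    (∀ y : ℝ, (∀ k : ℤ, ε < |y - k / n|) →
      (⨆ δ : {δ : ℝ // |δ| ≤ ε},
          |Int.fract (n * y) - Int.fract (n * (y + δ))|) = n * ε) ∧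
    ENNReal.ofReal ((1 - 2 * n * ε) * (n ^ 2 * ε ^ 2)) ≤
      ∫⁻ y in Icc (0 : ℝ) 1, ⨆ δ : {δ : ℝ // |δ| ≤ ε},
        ENNReal.ofReal (|Int.fract (n * y) - Int.fract (n * (y + δ))| ^ 2) :=
  sawtooth_sensitivity_and_robustness_general n hn ε hε
end
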